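/- Let α > 1, σ > 0, k > 0. Set c := σ/(αk), f(R) := √(1 + 4c/R + c²/R²) for R > 0, θ₊(R) := (2 + c/R + f(R))/(3α), and P_{k,R}(θ) := kR³θ(αθ − 1)² + σR²(1 − θ²). Then there exists R₀ > 0 such that for every R ≥ R₀: θ₊(R) ∈ [α⁻¹, 1] and θ₊(R) is the unique minimizer of P_{k,R} on the interval [α⁻¹, 1], i.e. P_{k,R}(θ₊(R)) < P_{k,R}(θ) for every θ ∈ [α⁻¹,1] with θ ≠ θ₊(R). Moreover θ₊(R) → α⁻¹ as R → +∞. -/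

import Mathlib

open Filter

noncomputable section

/-- The discriminant factor `f(R) = √(1 + 4c/R + c²/R²)`. -/
def fdisc (c R : ℝ) : ℝ := Real.sqrt (1 + 4*c/R + c^2/R^2)

/-- The critical point `θ₊(R) = (2 + c/R + f(R))/(3α)`. -/
def θplus (α c R : ℝ) : ℝ := (2 + c/R + fdisc c R) / (3*α)

/-- The critical point `θ₋(R) = (2 + c/R − f(R))/(3α)`. -/
def θminus (α c R : ℝ) : ℝ := (2 + c/R - fdisc c R) / (3*α)

/-- The total energy polynomial `P_{k,R}(θ) = kR³θ(αθ−1)² + σR²(1−θ²)`. -/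
def Ptot (α σ k R θ : ℝ) : ℝ := k*R^3*θ*(α*θ - 1)^2 + σ*R^2*(1 - θ^2)

/-!
With `u = c/R` and `f = fdisc c R` one has `f² = 1 + 4u + u²`, and, since `σ = αkc`, the map
`θ ↦ P(θ) - P(θ₊)` is the cubic `kα²R³ (θ - θ₊)² (θ - θ₃)` with `θ₃ = (2 + u - 2f)/(3α)`.
For `u > 0` we have `2f > 1 + u`, so `θ₃ < α⁻¹` and the cubic is positive on `[α⁻¹, ∞)` away
from `θ₊`. Moreover `f ≥ 1` gives `θ₊ ≥ α⁻¹`, the bound `2αu ≤ (α - 1)(3α - 1)` (true for large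
`R`) gives `θ₊ ≤ 1`, and `θ₊ → 3/(3α)` as `u → 0`.
-/

section

variable {α c R : ℝ}

/-- The third root of the cubic `θ ↦ P(θ) - P(θ₊)`, whose other root `θ₊` is double. -/
def θthird (α c R : ℝ) : ℝ := (2 + c / R - 2 * fdisc c R) / (3 * α)

lemma fdisc_eq_sqrt (c R : ℝ) : fdisc c R = √(1 + 4 * (c / R) + (c / R) ^ 2) := by
  rw [fdisc]; ring_nf

lemma fdisc_sq (hu : 0 ≤ c / R) : fdisc c R ^ 2 = 1 + 4 * (c / R) + (c / R) ^ 2 := by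
  rw [fdisc_eq_sqrt, Real.sq_sqrt (by positivity)]

lemma one_le_fdisc (hu : 0 ≤ c / R) : 1 ≤ fdisc c R := by
  rw [fdisc_eq_sqrt, Real.one_le_sqrt]
  nlinarith

lemma one_lt_fdisc (hu : 0 < c / R) : 1 < fdisc c R := by
  rw [fdisc_eq_sqrt, Real.lt_sqrt zero_le_one]
  nlinarith

lemma inv_le_θplus (hα : 0 < α) (hu : 0 ≤ c / R) : α⁻¹ ≤ θplus α c R := by
  rw [θplus, le_div_iff₀ (by positivity), inv_mul_eq_div, div_le_iff₀ hα]
  nlinarith [one_le_fdisc hu]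

lemma θplus_le_one (hα : 1 ≤ α) (hu : 0 ≤ c / R)
    (hsmall : 2 * α * (c / R) ≤ (α - 1) * (3 * α - 1)) : θplus α c R ≤ 1 := by
  have hf : fdisc c R ≤ 3 * α - 2 - c / R := by
    rw [fdisc_eq_sqrt, Real.sqrt_le_left] <;> nlinarith
  rw [θplus, div_le_one (by positivity)]
  linarith

lemma Ptot_sub_Ptot_θplus (k θ : ℝ) (hα : α ≠ 0) (hR : R ≠ 0) (hu : 0 ≤ c / R) :
    Ptot α (α * k * c) k R θ - Ptot α (α * k * c) k R (θplus α c R)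
      = k * α ^ 2 * R ^ 3 * (θ - θplus α c R) ^ 2 * (θ - θthird α c R) := by
  have hf := fdisc_sq hu
  have hσ : α * k * c = α * k * (c / R) * R := by field_simp
  simp only [Ptot, θplus, θthird, hσ]
  generalize c / R = u at *
  generalize fdisc c R = f at *
  field_simp
  linear_combination (3 * k * (3 * α * θ - (2 + f + u))) * hf

lemma θthird_lt_inv (hα : 0 < α) (hu : 0 < c / R) : θthird α c R < α⁻¹ := by
  have h : c / R + 1 < 2 * fdisc c R := by nlinarith [fdisc_sq hu.le, one_lt_fdisc hu]
  rw [θthird, div_lt_iff₀ (by positivity), inv_mul_eq_div, lt_div_iff₀ hα]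
  nlinarith

lemma Ptot_θplus_lt {k θ : ℝ} (hα : 0 < α) (hk : 0 < k) (hR : 0 < R) (hc : 0 < c)
    (hθ : α⁻¹ ≤ θ) (hne : θ ≠ θplus α c R) :
    Ptot α (α * k * c) k R (θplus α c R) < Ptot α (α * k * c) k R θ := by
  have hu : 0 < c / R := div_pos hc hR
  have hdiff := Ptot_sub_Ptot_θplus k θ hα.ne' hR.ne' hu.le
  have hsq : θ - θplus α c R ≠ 0 := sub_ne_zero.2 hne
  have hroot : 0 < θ - θthird α c R := by linarith [θthird_lt_inv hα hu]
  have : 0 < k * α ^ 2 * R ^ 3 * (θ - θplus α c R) ^ 2 * (θ - θthird α c R) := by positivity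
  linarith

lemma tendsto_θplus (α c : ℝ) : Tendsto (θplus α c) atTop (nhds α⁻¹) := by
  set g : ℝ → ℝ := fun u => (2 + u + √(1 + 4 * u + u ^ 2)) / (3 * α)
  have hg : θplus α c = g ∘ (c / ·) :=
    funext fun R => by simp only [θplus, fdisc_eq_sqrt, g, Function.comp]
  have hg0 : g 0 = α⁻¹ := by norm_num [g]; field_simp
  rw [hg, ← hg0]
  exact ((by fun_prop : Continuous g).tendsto 0).comp (tendsto_const_nhds.div_atTop tendsto_id)

end

/-- for large `R`, `θ₊(R)` lies in `[α⁻¹,1]` and is the unique minimizer of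
`P_{k,R}` there; moreover `θ₊(R) → α⁻¹` as `R → +∞`. -/
theorem unique_minimizer_of_total_energy_polynomial (α σ k : ℝ)
    (hα : 1 < α) (hσ : 0 < σ) (hk : 0 < k) :
    (∃ R₀ : ℝ, 0 < R₀ ∧ ∀ R ≥ R₀,
      θplus α (σ/(α*k)) R ∈ Set.Icc α⁻¹ 1 ∧
      ∀ θ ∈ Set.Icc α⁻¹ (1:ℝ), θ ≠ θplus α (σ/(α*k)) R →
        Ptot α σ k R (θplus α (σ/(α*k)) R) < Ptot α σ k R θ) ∧
    Tendsto (fun R => θplus α (σ/(α*k)) R) atTop (nhds α⁻¹) := by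
  set c := σ / (α * k)
  have hα0 : 0 < α := by linarith
  have hc : 0 < c := by positivity
  have hgap : 0 < (α - 1) * (3 * α - 1) := by nlinarith
  have hσc : σ = α * k * c := by simp only [c]; field_simp
  refine ⟨⟨2 * α * c / ((α - 1) * (3 * α - 1)), by positivity, fun R hR => ?_⟩, tendsto_θplus α c⟩
  have hR0 : 0 < R := lt_of_lt_of_le (by positivity) hR
  have hsmall : 2 * α * (c / R) ≤ (α - 1) * (3 * α - 1) := by
    rw [mul_div_assoc', div_le_iff₀ hR0, mul_comm _ R, ← div_le_iff₀ hgap]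
    exact hR
  refine ⟨⟨inv_le_θplus hα0 (by positivity), θplus_le_one hα.le (by positivity) hsmall⟩,
    fun θ hθ hne => ?_⟩
  rw [hσc]
  exact Ptot_θplus_lt hα0 hk hR0 hc hθ.1 hne
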